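/- arXiv:0708.2539 — 4 statements merged into one kernel-verified Lean document; each statement's English description precedes it below -/
import Mathlib

section
/- There exist a constant c > 0 and x₀ such that for all real x ≥ x₀, the number of elements of P₂* not exceeding x satisfies P₂*(x) ≥ c · x·log log x / log x. -/
open scoped Classical

noncomputable def pcount (N : ℕ) : ℕ := ((Finset.Icc 1 N).filter Nat.Prime).card

lemma pcount_mono : Monotone pcount := fun a b hab => by
  apply Finset.card_le_card
  exact Finset.filter_subset_filter _ (Finset.Icc_subset_Icc_right hab)

lemma pcount_le (N : ℕ) : pcount N ≤ N := by
  calc pcount N ≤ (Finset.Icc 1 N).card := Finset.card_filter_le _ _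
  _ = N := by rw [Nat.card_Icc]; omega

lemma cheb_nat (n : ℕ) (hn : 1 ≤ n) : 4 ^ n ≤ (2 * n + 1) * (2 * n) ^ pcount (2 * n) := by
  have h2 : 4 ^ n ≤ (2 * n + 1) * Nat.centralBinom n :=
    Nat.four_pow_le_two_mul_add_one_mul_central_binom n
  have h1 : Nat.centralBinom n ≤ (2 * n) ^ pcount (2 * n) := by
    conv_lhs => rw [← Nat.prod_pow_factorization_centralBinom n]
    set ν : ℕ → ℕ := fun p => (Nat.centralBinom n).factorization p with hν
    have hsplit : ∏ p ∈ Finset.range (2 * n + 1), p ^ ν p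
        = ∏ p ∈ (Finset.range (2 * n + 1)).filter (fun p => ν p ≠ 0), p ^ ν p := by
      rw [Finset.prod_filter_of_ne]
      intro p _ hne
      intro h0
      have : p ^ ν p = 1 := by rw [h0]; rfl
      exact hne this
    rw [hsplit]
    set T := (Finset.range (2 * n + 1)).filter (fun p => ν p ≠ 0) with hT
    have hbound : ∏ p ∈ T, p ^ ν p ≤ ∏ _p ∈ T, (2 * n) := by
      apply Finset.prod_le_prod'
      intro p hp
      exact Nat.pow_factorization_choose_le (by omega)
    have hcardT : T.card ≤ pcount (2 * n) := by
      apply Finset.card_le_card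
      intro p hp
      rw [hT, Finset.mem_filter, Finset.mem_range] at hp
      obtain ⟨hlt, hne⟩ := hp
      have hpf : p ∈ (Nat.centralBinom n).primeFactors := by
        rw [← Nat.support_factorization, Finsupp.mem_support_iff]
        exact hne
      have hpp : p.Prime := Nat.prime_of_mem_primeFactors hpf
      simp only [pcount, Finset.mem_filter, Finset.mem_Icc]
      exact ⟨⟨hpp.one_lt.le, by omega⟩, hpp⟩
    calc ∏ p ∈ T, p ^ ν p ≤ ∏ _p ∈ T, (2 * n) := hbound
      _ = (2 * n) ^ T.card := by rw [Finset.prod_const]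
      _ ≤ (2 * n) ^ pcount (2 * n) := Nat.pow_le_pow_right (by omega) hcardT
  calc 4 ^ n ≤ (2 * n + 1) * Nat.centralBinom n := h2
    _ ≤ (2 * n + 1) * (2 * n) ^ pcount (2 * n) := Nat.mul_le_mul_left _ h1

open Real

lemma log_le_two_sqrt {s : ℝ} (hs : 0 < s) : Real.log s ≤ 2 * Real.sqrt s := by
  have h1 : Real.log s = 2 * Real.log (Real.sqrt s) := by
    conv_lhs => rw [← Real.sq_sqrt hs.le]
    rw [sq, Real.log_mul (by positivity) (by positivity)]
    ring
  rw [h1]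
  have h2 : Real.log (Real.sqrt s) ≤ Real.sqrt s - 1 :=
    Real.log_le_sub_one_of_pos (Real.sqrt_pos.mpr hs)
  nlinarith [Real.sqrt_nonneg s]

lemma one_le_log_four : (1:ℝ) ≤ Real.log 4 := by
  rw [Real.le_log_iff_exp_le (by norm_num)]
  have := Real.exp_one_lt_d9
  linarith

lemma cheb_real {t : ℝ} (ht : (1000000:ℝ) ≤ t) :
    t / (4 * Real.log t) ≤ (pcount ⌊t⌋₊ : ℝ) := by
  have ht0 : (0:ℝ) < t := by linarith
  set K := ⌊t⌋₊ with hK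
  set n : ℕ := K / 2 with hn
  have hKle : (K : ℝ) ≤ t := Nat.floor_le ht0.le
  have hKgt : t - 1 < (K : ℝ) := Nat.sub_one_lt_floor t
  have hKbig : 1000000 ≤ K := Nat.le_floor (by norm_num; linarith)
  have h2nK : 2 * n ≤ K := by omega
  have hK2n : K ≤ 2 * n + 1 := by omega
  have hn1 : 1 ≤ n := by omega
  have h2nt : t - 2 ≤ 2 * (n:ℝ) := by
    have : (K:ℝ) ≤ 2 * (n:ℝ) + 1 := by exact_mod_cast hK2n
    linarith
  have h2nt' : 2 * (n:ℝ) ≤ t := by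
    have : (2 * n : ℝ) ≤ (K:ℝ) := by exact_mod_cast h2nK
    linarith
  set pi : ℕ := pcount (2 * n) with hpi
  -- cast the nat inequality
  have hnat : ((4:ℝ)) ^ n ≤ (2 * (n:ℝ) + 1) * (2 * (n:ℝ)) ^ pi := by
    have := cheb_nat n hn1
    exact_mod_cast this
  have h2npos : (0:ℝ) < 2 * (n:ℝ) := by positivity
  -- take logs
  have hlog : (n:ℝ) * Real.log 4 ≤ Real.log (2 * (n:ℝ) + 1) + (pi:ℝ) * Real.log (2 * (n:ℝ)) := by
    have h1 : Real.log ((4:ℝ) ^ n) ≤ Real.log ((2 * (n:ℝ) + 1) * (2 * (n:ℝ)) ^ pi) :=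
      Real.log_le_log (by positivity) hnat
    rw [Real.log_pow, Real.log_mul (by positivity) (by positivity), Real.log_pow] at h1
    calc (n:ℝ) * Real.log 4 = (n:ℝ) * Real.log 4 := rfl
      _ ≤ _ := h1
  have hlog4 := one_le_log_four
  have hsq : Real.sqrt (t + 1) ≤ t / 10 := by
    have h1 : t + 1 ≤ (t / 10) ^ 2 := by nlinarith
    calc Real.sqrt (t + 1) ≤ Real.sqrt ((t / 10) ^ 2) := Real.sqrt_le_sqrt h1
      _ = t / 10 := Real.sqrt_sq (by linarith)
  have hlog2n1 : Real.log (2 * (n:ℝ) + 1) ≤ t / 5 := by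
    calc Real.log (2 * (n:ℝ) + 1) ≤ Real.log (t + 1) :=
          Real.log_le_log (by positivity) (by linarith)
      _ ≤ 2 * Real.sqrt (t + 1) := log_le_two_sqrt (by linarith)
      _ ≤ 2 * (t / 10) := by linarith
      _ = t / 5 := by ring
  have hmain : t / 4 ≤ (pi:ℝ) * Real.log (2 * (n:ℝ)) := by
    have h1 : (n:ℝ) ≤ (n:ℝ) * Real.log 4 := by nlinarith [Nat.cast_nonneg (α := ℝ) n]
    nlinarith
  have hlog2nle : Real.log (2 * (n:ℝ)) ≤ Real.log t := Real.log_le_log h2npos h2nt'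
  have hlogt : 0 < Real.log t := Real.log_pos (by linarith)
  have hpit : t / 4 ≤ (pi:ℝ) * Real.log t := by
    have hpi0 : (0:ℝ) ≤ (pi:ℝ) := Nat.cast_nonneg _
    nlinarith
  have hfinal : t / (4 * Real.log t) ≤ (pi:ℝ) := by
    rw [div_le_iff₀ (by positivity)]
    nlinarith
  have hmono : (pi:ℝ) ≤ (pcount K : ℝ) := by exact_mod_cast pcount_mono h2nK
  linarith

noncomputable def invHom : ℕ →* ℝ where
  toFun n := (n : ℝ)⁻¹
  map_one' := by norm_num
  map_mul' m n := by push_cast; exact mul_inv _ _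

lemma mertens (N : ℕ) (hN : 2 ≤ N) :
    Real.log (Real.log N) ≤ ∑ p ∈ N.primesBelow, 2 / (p : ℝ) := by
  have hnorm : ∀ {p : ℕ}, p.Prime → ‖invHom p‖ < 1 := by
    intro p hp
    have h2 : (2:ℝ) ≤ p := by exact_mod_cast hp.two_le
    simp only [invHom, MonoidHom.coe_mk, OneHom.coe_mk, Real.norm_eq_abs]
    rw [abs_of_nonneg (by positivity)]
    rw [inv_lt_one_iff₀]
    right; linarith
  obtain ⟨hsum, hhas⟩ :=
    EulerProduct.summable_and_hasSum_smoothNumbers_prod_primesBelow_geometric (f := invHom) hnorm N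
  have hsum' : Summable (fun m : N.smoothNumbers ↦ ((m : ℕ) : ℝ)⁻¹) := by
    refine Summable.of_norm ?_
    exact hsum
  -- harmonic sum bounded by the product
  have hHle : ∑ i ∈ Finset.Icc 1 (N - 1), ((i:ℕ) : ℝ)⁻¹
      ≤ ∏ p ∈ N.primesBelow, (1 - (p:ℝ)⁻¹)⁻¹ := by
    have hind : Summable (Set.indicator (N.smoothNumbers) (fun n : ℕ => (n:ℝ)⁻¹)) := by
      rw [← summable_subtype_iff_indicator]
      exact hsum'
    have h1 : ∑ i ∈ Finset.Icc 1 (N - 1), ((i:ℕ) : ℝ)⁻¹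
        = ∑ i ∈ Finset.Icc 1 (N - 1),
            Set.indicator (N.smoothNumbers) (fun n : ℕ => (n:ℝ)⁻¹) i := by
      apply Finset.sum_congr rfl
      intro i hi
      rw [Finset.mem_Icc] at hi
      rw [Set.indicator_of_mem]
      exact Nat.mem_smoothNumbers_of_lt (by omega) (by omega)
    have h2 : ∑ i ∈ Finset.Icc 1 (N - 1),
          Set.indicator (N.smoothNumbers) (fun n : ℕ => (n:ℝ)⁻¹) i
        ≤ ∑' i : ℕ, Set.indicator (N.smoothNumbers) (fun n : ℕ => (n:ℝ)⁻¹) i := by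
      apply Summable.sum_le_tsum
      · intro i _
        apply Set.indicator_nonneg
        intro n _
        positivity
      · exact hind
    have h3 : ∑' i : ℕ, Set.indicator (N.smoothNumbers) (fun n : ℕ => (n:ℝ)⁻¹) i
        = ∏ p ∈ N.primesBelow, (1 - (p:ℝ)⁻¹)⁻¹ := by
      rw [← tsum_subtype]
      exact hhas.tsum_eq
    rw [h1]; rw [h3] at h2; exact h2
  -- the product is at most exp of twice the sum of reciprocals
  have hprodle : ∏ p ∈ N.primesBelow, (1 - (p:ℝ)⁻¹)⁻¹
      ≤ Real.exp (∑ p ∈ N.primesBelow, 2 / (p:ℝ)) := by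
    rw [Real.exp_sum]
    apply Finset.prod_le_prod
    · intro p hp
      have h2 : (2:ℝ) ≤ p := by exact_mod_cast (Nat.prime_of_mem_primesBelow hp).two_le
      have : (p:ℝ)⁻¹ ≤ 1/2 := by
        rw [inv_le_comm₀ (by linarith) (by norm_num)]
        linarith
      have : (0:ℝ) < 1 - (p:ℝ)⁻¹ := by linarith
      positivity
    · intro p hp
      have h2 : (2:ℝ) ≤ p := by exact_mod_cast (Nat.prime_of_mem_primesBelow hp).two_le
      have hp0 : (0:ℝ) < p := by linarith
      have hinv : (p:ℝ)⁻¹ ≤ 1/2 := by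
        rw [inv_le_comm₀ (by linarith) (by norm_num)]
        linarith
      have hpos : (0:ℝ) < 1 - (p:ℝ)⁻¹ := by linarith
      have step1 : (1 - (p:ℝ)⁻¹)⁻¹ ≤ 1 + 2 / (p:ℝ) := by
        rw [← one_div, div_le_iff₀ hpos]
        have hexp : (1 + 2/(p:ℝ)) * (1 - (p:ℝ)⁻¹) = 1 + 1/p - 2/p^2 := by
          field_simp
          ring
        rw [hexp]
        have h1 : 2/(p:ℝ)^2 ≤ 1/p := by
          rw [div_le_div_iff₀ (by positivity) (by positivity)]
          nlinarith
        linarith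
      calc (1 - (p:ℝ)⁻¹)⁻¹ ≤ 1 + 2/(p:ℝ) := step1
        _ ≤ Real.exp (2 / (p:ℝ)) := by
            have := Real.add_one_le_exp (2 / (p:ℝ))
            linarith
  -- log N ≤ harmonic sum
  have hharm : Real.log N ≤ ∑ i ∈ Finset.Icc 1 (N - 1), ((i:ℕ) : ℝ)⁻¹ := by
    have h := log_add_one_le_harmonic (N - 1)
    have heq : ((harmonic (N-1) : ℚ) : ℝ) = ∑ i ∈ Finset.Icc 1 (N - 1), ((i:ℕ) : ℝ)⁻¹ := by
      rw [harmonic_eq_sum_Icc]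
      push_cast
      rfl
    rw [heq] at h
    have hN1 : N - 1 + 1 = N := by omega
    rw [hN1] at h
    exact h
  have hlogN : (0:ℝ) < Real.log N := Real.log_pos (by exact_mod_cast hN)
  rw [Real.log_le_iff_le_exp hlogN]
  calc Real.log N ≤ ∑ i ∈ Finset.Icc 1 (N - 1), ((i:ℕ) : ℝ)⁻¹ := hharm
    _ ≤ ∏ p ∈ N.primesBelow, (1 - (p:ℝ)⁻¹)⁻¹ := hHle
    _ ≤ Real.exp (∑ p ∈ N.primesBelow, 2 / (p:ℝ)) := hprodle

lemma log_four_le_two : Real.log 4 ≤ 2 := by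
  rw [Real.log_le_iff_le_exp (by norm_num)]
  have h27 : (2.7:ℝ) < Real.exp 1 := by
    have := Real.exp_one_gt_d9
    norm_num at this ⊢
    linarith
  have hexp2 : Real.exp 2 = Real.exp 1 * Real.exp 1 := by
    rw [← Real.exp_add]; norm_num
  rw [hexp2]
  nlinarith [h27]

/-- `P₂*`: all primes together with all products `p₁ * p₂` of primes with `p₁² < p₂`. -/
def P2star (n : ℕ) : Prop :=
  n.Prime ∨ ∃ p q : ℕ, p.Prime ∧ q.Prime ∧ p ^ 2 < q ∧ n = p * q

set_option maxHeartbeats 2000000 in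
/-- Lower bound for the counting function of `P₂*`:
`P₂*(x) ≥ c · x log log x / log x` for all sufficiently large `x`. -/
theorem P2star_count_lower : ∃ c : ℝ, 0 < c ∧ ∃ x₀ : ℝ, ∀ x : ℝ, x₀ ≤ x →
    c * (x * Real.log (Real.log x) / Real.log x) ≤
      (((Finset.Icc 1 ⌊x⌋₊).filter (fun n => P2star n)).card : ℝ) := by
  refine ⟨1/32, by norm_num, Real.exp (Real.exp 4) + 2^80, fun x hx => ?_⟩
  have hxe : Real.exp (Real.exp 4) ≤ x := by
    have : (0:ℝ) < 2^80 := by positivity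
    linarith
  have hx80 : (2:ℝ)^80 ≤ x := by
    have := Real.exp_pos (Real.exp 4)
    linarith
  have hx0 : (0:ℝ) < x := lt_of_lt_of_le (by positivity) hx80
  have hx24 : (10:ℝ)^24 ≤ x := by
    have h : (10:ℝ)^24 ≤ (2:ℝ)^80 := by norm_num
    linarith
  have hlogx : Real.exp 4 ≤ Real.log x := by
    rw [Real.le_log_iff_exp_le hx0]; exact hxe
  have hexp4 : (4:ℝ) < Real.exp 4 := by
    have := Real.add_one_le_exp (4:ℝ); linarith
  have hlogx1 : (1:ℝ) < Real.log x := by linarith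
  have hlogx0 : (0:ℝ) < Real.log x := by linarith
  have hloglog : (4:ℝ) ≤ Real.log (Real.log x) := by
    rw [Real.le_log_iff_exp_le hlogx0]; exact hlogx
  have hll1 : (1:ℝ) ≤ Real.log (Real.log x) := by linarith
  have hll0 : (0:ℝ) < Real.log (Real.log x) := by linarith
  set L := Real.log x with hL
  set G := Real.log (Real.log x) with hG
  -- the quarter-power
  set y := x ^ ((1:ℝ)/4) with hy
  have hy0 : (0:ℝ) < y := Real.rpow_pos_of_pos hx0 _
  have hy4 : y ^ (4:ℕ) = x := by
    rw [hy, ← Real.rpow_natCast (x ^ ((1:ℝ)/4)) 4, ← Real.rpow_mul hx0.le]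
    norm_num
  have hy6 : (1000000:ℝ) ≤ y := by
    by_contra h
    push_neg at h
    have h1 : y ^ (4:ℕ) < (1000000:ℝ) ^ (4:ℕ) := by
      apply pow_lt_pow_left₀ h hy0.le
      norm_num
    rw [hy4] at h1
    norm_num at h1
    linarith
  have hy1 : (1:ℝ) ≤ y := by linarith
  have hlogy : Real.log y = L / 4 := by
    rw [hy, Real.log_rpow hx0]; rw [hL]; ring
  have hlogy0 : (0:ℝ) < Real.log y := by rw [hlogy]; linarith
  set M := ⌊y⌋₊ with hM
  have hM1 : 1 ≤ M := Nat.le_floor (by exact_mod_cast (by linarith : (1:ℝ) ≤ y))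
  have hMy : (M:ℝ) ≤ y := Nat.floor_le hy0.le
  have hyM1 : y < (M:ℝ) + 1 := Nat.lt_floor_add_one y
  set K := ⌊x⌋₊ with hK
  set P := (M+1).primesBelow with hP
  set Q : ℕ → Finset ℕ := fun p => (Finset.Ioc (p^2) (K / p)).filter Nat.Prime with hQ
  set A : ℕ → Finset ℕ := fun p => (Q p).image (fun q => p * q) with hA
  -- membership extraction
  have hQmem : ∀ p q : ℕ, q ∈ Q p → q.Prime ∧ p^2 < q ∧ q ≤ K / p := by
    intro p q hq
    rw [hQ, Finset.mem_filter, Finset.mem_Ioc] at hq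
    exact ⟨hq.2, hq.1.1, hq.1.2⟩
  -- (I) subset
  have hsub : P.biUnion A ⊆ (Finset.Icc 1 K).filter (fun n => P2star n) := by
    intro n hn
    rw [Finset.mem_biUnion] at hn
    obtain ⟨p, hpP, hnA⟩ := hn
    obtain ⟨q, hqQ, rfl⟩ := Finset.mem_image.mp hnA
    have hpp : p.Prime := Nat.prime_of_mem_primesBelow hpP
    obtain ⟨hqp, hq1, hq2⟩ := hQmem p q hqQ
    refine Finset.mem_filter.mpr ⟨Finset.mem_Icc.mpr ⟨?_, ?_⟩, Or.inr ⟨p, q, hpp, hqp, hq1, rfl⟩⟩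
    · have h1 := hpp.pos
      have h2 := hqp.pos
      exact Nat.one_le_iff_ne_zero.mpr (by positivity)
    · have h := (Nat.le_div_iff_mul_le hpp.pos).mp hq2
      calc p * q = q * p := mul_comm p q
        _ ≤ K := h
  -- (II) disjointness
  have hdisj : ∀ p₁ ∈ P, ∀ p₂ ∈ P, p₁ ≠ p₂ → Disjoint (A p₁) (A p₂) := by
    intro p₁ h₁ p₂ h₂ hne
    have hp₁ : p₁.Prime := Nat.prime_of_mem_primesBelow h₁
    have hp₂ : p₂.Prime := Nat.prime_of_mem_primesBelow h₂
    rw [Finset.disjoint_left]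
    intro n hn1 hn2
    obtain ⟨q₁, hq₁Q, hn₁⟩ := Finset.mem_image.mp hn1
    obtain ⟨q₂, hq₂Q, hn₂⟩ := Finset.mem_image.mp hn2
    obtain ⟨hq₁p, hq₁gt, _⟩ := hQmem _ _ hq₁Q
    obtain ⟨hq₂p, hq₂gt, _⟩ := hQmem _ _ hq₂Q
    have heq : p₁ * q₁ = p₂ * q₂ := by rw [hn₁, hn₂]
    have hdvd : p₁ ∣ p₂ * q₂ := heq ▸ Dvd.intro q₁ rfl
    rcases (Nat.Prime.dvd_mul hp₁).mp hdvd with h | h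
    · exact hne ((Nat.prime_dvd_prime_iff_eq hp₁ hp₂).mp h)
    · have h12 : p₁ = q₂ := (Nat.prime_dvd_prime_iff_eq hp₁ hq₂p).mp h
      have hq1p2 : q₁ = p₂ := by
        apply Nat.eq_of_mul_eq_mul_left hp₁.pos
        rw [heq, ← h12]; ring
      have e1 : p₁ ≤ p₁^2 := Nat.le_self_pow two_ne_zero p₁
      have e2 : p₂ ≤ p₂^2 := Nat.le_self_pow two_ne_zero p₂
      omega
  -- (III) cardinality chain
  have hcard : (∑ p ∈ P, ((Q p).card : ℝ))
      ≤ (((Finset.Icc 1 K).filter (fun n => P2star n)).card : ℝ) := by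
    have h1 : (P.biUnion A).card = ∑ p ∈ P, (A p).card := Finset.card_biUnion hdisj
    have h2 : ∀ p ∈ P, (A p).card = (Q p).card := by
      intro p hp
      apply Finset.card_image_of_injective
      exact mul_right_injective₀ (Nat.prime_of_mem_primesBelow hp).ne_zero
    have h3 : (P.biUnion A).card ≤ ((Finset.Icc 1 K).filter (fun n => P2star n)).card :=
      Finset.card_le_card hsub
    rw [h1] at h3
    rw [Finset.sum_congr rfl h2] at h3
    exact_mod_cast h3
  -- (IV) per-prime lower bound
  have hper : ∀ p ∈ P, x / (4 * p * L) - (p:ℝ)^2 ≤ ((Q p).card : ℝ) := by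
    intro p hp
    have hpp : p.Prime := Nat.prime_of_mem_primesBelow hp
    have hpM : p ≤ M := by
      have := Nat.lt_of_mem_primesBelow hp; omega
    have hp2 : (2:ℝ) ≤ p := by exact_mod_cast hpp.two_le
    have hp0 : (0:ℝ) < p := by linarith
    have hpy : (p:ℝ) ≤ y := le_trans (by exact_mod_cast hpM) hMy
    set t := x / p with hT
    have hxy3 : x / y = y ^ (3:ℕ) := by
      rw [← hy4, pow_succ, mul_div_assoc, div_self (ne_of_gt hy0), mul_one]
    have hty : y ^ (3:ℕ) ≤ t := by
      rw [← hxy3, hT]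
      gcongr
    have hy3 : (1000000:ℝ) ≤ y ^ (3:ℕ) := by
      have hprod : (0:ℝ) ≤ (y - 1) * (y + 1) * y :=
        mul_nonneg (mul_nonneg (by linarith) (by linarith)) hy0.le
      nlinarith [hprod]
    have ht6 : (1000000:ℝ) ≤ t := le_trans hy3 hty
    have hcheb := cheb_real ht6
    have hfloor : ⌊t⌋₊ = K / p := by
      rw [hT, hK, Nat.floor_div_natCast]
    rw [hfloor] at hcheb
    have ht0 : (0:ℝ) < t := by linarith
    have htx : t ≤ x := by
      rw [hT]
      apply div_le_self hx0.le
      linarith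
    have hlogt0 : (0:ℝ) < Real.log t := Real.log_pos (by linarith)
    have hlogtle : Real.log t ≤ L := Real.log_le_log ht0 htx
    have hstep : x / (4 * p * L) ≤ t / (4 * Real.log t) := by
      have h1 : x / (4 * p * L) = t / (4 * L) := by
        rw [hT]; ring
      rw [h1, div_le_div_iff₀ (by positivity) (by positivity)]
      nlinarith
    -- pcount (K/p) ≤ card Q p + p^2  (nat)
    have hQcard : pcount (K / p) ≤ (Q p).card + p^2 := by
      have hsub2 : (Finset.Icc 1 (K/p)).filter Nat.Prime ⊆ Q p ∪ Finset.Icc 1 (p^2) := by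
        intro q hq
        rw [Finset.mem_filter, Finset.mem_Icc] at hq
        obtain ⟨⟨hq1, hq2⟩, hqp⟩ := hq
        rw [Finset.mem_union]
        by_cases hcase : p^2 < q
        · left
          rw [hQ, Finset.mem_filter, Finset.mem_Ioc]
          exact ⟨⟨hcase, hq2⟩, hqp⟩
        · right
          rw [Finset.mem_Icc]
          omega
      calc pcount (K/p) ≤ (Q p ∪ Finset.Icc 1 (p^2)).card := Finset.card_le_card hsub2
        _ ≤ (Q p).card + (Finset.Icc 1 (p^2)).card := Finset.card_union_le _ _
        _ = (Q p).card + p^2 := by rw [Nat.card_Icc]; omega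
    have hQcastR : (pcount (K/p) : ℝ) ≤ ((Q p).card : ℝ) + (p:ℝ)^2 := by exact_mod_cast hQcard
    have := le_trans hstep (le_trans hcheb hQcastR)
    linarith
  -- (V) sum of reciprocals lower bound
  have hsum1 : G / 4 ≤ ∑ p ∈ P, (p:ℝ)⁻¹ := by
    have hm := mertens (M+1) (by omega)
    have h1 : Real.log y ≤ Real.log (M+1) := by
      apply Real.log_le_log hy0
      push_cast
      linarith
    have h2 : Real.log (Real.log y) ≤ Real.log (Real.log (M+1)) :=
      Real.log_le_log hlogy0 h1
    have h3 : Real.log (Real.log y) = G - Real.log 4 := by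
      rw [hlogy, Real.log_div (ne_of_gt hlogx0) (by norm_num), hG]
    have hlog4le2 : Real.log 4 ≤ 2 := log_four_le_two
    have h4 : G / 2 ≤ Real.log (Real.log (M+1)) := by
      rw [h3] at h2
      linarith
    have h5 : ∑ p ∈ (M+1).primesBelow, 2 / (p:ℝ) = 2 * ∑ p ∈ P, (p:ℝ)⁻¹ := by
      rw [hP, Finset.mul_sum]
      apply Finset.sum_congr rfl
      intro p _
      rw [div_eq_mul_inv]
    have hmm : (((M:ℕ)+1 : ℕ) : ℝ) = (M:ℝ)+1 := by push_cast; ring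
    rw [hmm] at hm
    rw [h5] at hm
    linarith
  -- (VI) sum of squares upper bound
  have hsum2 : ∑ p ∈ P, (p:ℝ)^2 ≤ y ^ (3:ℕ) := by
    have hPcard : P.card ≤ M := by
      have : P ⊆ Finset.Icc 1 M := by
        intro p hp
        have hpp : p.Prime := Nat.prime_of_mem_primesBelow hp
        have h1 : p < M + 1 := Nat.lt_of_mem_primesBelow hp
        have h2 : 1 ≤ p := hpp.one_lt.le
        rw [Finset.mem_Icc]
        omega
      calc P.card ≤ (Finset.Icc 1 M).card := Finset.card_le_card this
        _ = M := by rw [Nat.card_Icc]; omega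
    have hbound : ∀ p ∈ P, (p:ℝ)^2 ≤ (M:ℝ)^2 := by
      intro p hp
      have hlt : p ≤ M := Nat.lt_succ_iff.mp (Nat.lt_of_mem_primesBelow hp)
      have hpM : (p:ℝ) ≤ M := by exact_mod_cast hlt
      have hp0 : (0:ℝ) ≤ p := Nat.cast_nonneg _
      nlinarith
    calc ∑ p ∈ P, (p:ℝ)^2 ≤ P.card • ((M:ℝ)^2) := Finset.sum_le_card_nsmul _ _ _ hbound
      _ = (P.card : ℝ) * (M:ℝ)^2 := by rw [nsmul_eq_mul]
      _ ≤ (M:ℝ) * (M:ℝ)^2 := by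
          have : (P.card : ℝ) ≤ (M:ℝ) := by exact_mod_cast hPcard
          nlinarith [sq_nonneg (M:ℝ)]
      _ = (M:ℝ)^(3:ℕ) := by ring
      _ ≤ y^(3:ℕ) := pow_le_pow_left₀ (Nat.cast_nonneg _) hMy 3
  -- (VII) y^3 is small
  have hy3small : y ^ (3:ℕ) ≤ x * G / (64 * L) := by
    have hsqy : (512:ℝ) ≤ Real.sqrt y := by
      have : ((512:ℝ))^2 ≤ y := by nlinarith
      calc (512:ℝ) = Real.sqrt (512^2) := by
            rw [Real.sqrt_sq]; norm_num
        _ ≤ Real.sqrt y := Real.sqrt_le_sqrt this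
    have hlogyb : Real.log y ≤ 2 * Real.sqrt y := log_le_two_sqrt hy0
    have hsq2 : Real.sqrt y * Real.sqrt y = y := Real.mul_self_sqrt hy0.le
    have hLy : 64 * L ≤ y := by
      have h1 : L = 4 * Real.log y := by rw [hlogy]; ring
      nlinarith [Real.sqrt_nonneg y]
    have h2 : y^(3:ℕ) * (64 * L) ≤ x * G := by
      calc y^(3:ℕ) * (64 * L) ≤ y^(3:ℕ) * y := by
            apply mul_le_mul_of_nonneg_left hLy (by positivity)
        _ = y^(4:ℕ) := by ring
        _ = x := hy4
        _ ≤ x * G := by nlinarith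
    rw [le_div_iff₀ (by positivity)]
    linarith
  -- (VIII) final assembly
  have hsumlow : ∑ p ∈ P, (x / (4 * (p:ℝ) * L) - (p:ℝ)^2) ≤ ∑ p ∈ P, ((Q p).card : ℝ) :=
    Finset.sum_le_sum hper
  have hsplit : ∑ p ∈ P, (x / (4 * (p:ℝ) * L) - (p:ℝ)^2)
      = (x / (4 * L)) * (∑ p ∈ P, (p:ℝ)⁻¹) - ∑ p ∈ P, (p:ℝ)^2 := by
    rw [Finset.sum_sub_distrib, Finset.mul_sum]
    congr 1
    apply Finset.sum_congr rfl
    intro p hp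
    ring
  have hmain : x * G / (16 * L) - x * G / (64 * L) ≤ ∑ p ∈ P, ((Q p).card : ℝ) := by
    have h1 : x * G / (16 * L) ≤ (x / (4 * L)) * (∑ p ∈ P, (p:ℝ)⁻¹) := by
      calc x * G / (16 * L) = (x / (4 * L)) * (G / 4) := by field_simp; ring
        _ ≤ (x / (4 * L)) * (∑ p ∈ P, (p:ℝ)⁻¹) := by
            apply mul_le_mul_of_nonneg_left hsum1 (by positivity)
    have h2 : ∑ p ∈ P, (p:ℝ)^2 ≤ x * G / (64 * L) := le_trans hsum2 hy3small
    rw [hsplit] at hsumlow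
    linarith
  have hfinal : (1/32 : ℝ) * (x * G / L) ≤ x * G / (16 * L) - x * G / (64 * L) := by
    have he : x * G / (16 * L) - x * G / (64 * L) = (3/64) * (x * G / L) := by
      field_simp
      ring
    rw [he]
    have : (0:ℝ) ≤ x * G / L := by positivity
    linarith
  rw [hK] at hcard
  calc (1/32 : ℝ) * (x * G / L) ≤ x * G / (16 * L) - x * G / (64 * L) := hfinal
    _ ≤ ∑ p ∈ P, ((Q p).card : ℝ) := hmain
    _ ≤ _ := hcard
end

section
/- For every positive integer k, the sum over squarefree positive integers d' of 1/(d'·lcm(k, d')) equals (1/k) · ∏_{p | k, p prime} (1 + 1/p) · ∏_{p ∤ k, p prime} (1 + 1/p²). -/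
set_option maxHeartbeats 1000000
open scoped Classical

/-- For every positive integer `k`,
`∑_{d' squarefree} 1/(d'·lcm(k, d')) = (1/k) · ∏_{p ∣ k} (1 + 1/p) · ∏_{p ∤ k} (1 + 1/p²)`. -/
theorem sum_over_squarefree_eq (k : ℕ) (hk : 0 < k) :
    (∑' d' : {d : ℕ // Squarefree d}, (1 : ℝ) / ((d' : ℕ) * Nat.lcm k (d' : ℕ))) =
      (1 / (k : ℝ)) * (∏ p ∈ k.primeFactors, (1 + 1 / (p : ℝ))) *
        (∏' p : {p : ℕ // p.Prime ∧ ¬ p ∣ k}, (1 + 1 / ((p : ℕ) : ℝ) ^ 2)) := by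
  set g : ℕ → ℝ := fun n => if Squarefree n then (Nat.gcd k n : ℝ) / (n : ℝ) ^ 2 else 0 with hg
  have hg1 : g 1 = 1 := by simp [hg]
  have hg0 : g 0 = 0 := by simp [hg, not_squarefree_zero]
  have hgmul : ∀ {m n : ℕ}, Nat.Coprime m n → g (m * n) = g m * g n := by
    intro m n hmn
    simp only [hg, Nat.squarefree_mul hmn]
    by_cases hm : Squarefree m <;> by_cases hn : Squarefree n <;>
      simp [hm, hn, hmn.gcd_mul, Nat.cast_mul, mul_pow]
    ring
  have hsum : Summable (fun n => ‖g n‖) := by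
    apply Summable.of_nonneg_of_le (fun n => norm_nonneg _) (fun n => ?_)
      (((Real.summable_one_div_nat_pow (p := 2)).mpr one_lt_two).mul_left (k : ℝ))
    rcases eq_or_ne n 0 with rfl | hn
    · simp [hg]
    simp only [hg]
    rw [Real.norm_eq_abs]
    split_ifs with h
    · rw [abs_of_nonneg (by positivity)]
      rw [div_le_iff₀ (by positivity)]
      calc (Nat.gcd k n : ℝ) ≤ k := by exact_mod_cast Nat.le_of_dvd hk (Nat.gcd_dvd_left _ _)
        _ = k * (1 / n ^ 2 * n ^ 2) := by field_simp
        _ = (k : ℝ) * (1 / ↑n ^ 2) * ↑n ^ 2 := by ring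
    · simp only [abs_zero]; positivity
  have hgp : ∀ p : ℕ, p.Prime →
      g p = if p ∣ k then 1 / (p : ℝ) else 1 / (p : ℝ) ^ 2 := by
    intro p hp
    have hp0 : (p : ℝ) ≠ 0 := Nat.cast_ne_zero.mpr hp.pos.ne'
    simp only [hg, hp.squarefree, if_true]
    split_ifs with h
    · rw [Nat.dvd_antisymm (Nat.gcd_dvd_right k p) (Nat.dvd_gcd h dvd_rfl)]
      field_simp
    · rw [Nat.Coprime.gcd_eq_one (Nat.coprime_comm.mp (hp.coprime_iff_not_dvd.mpr h))]
      norm_num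
  have hnotsq : ∀ (p e : ℕ), p.Prime → 2 ≤ e → ¬ Squarefree (p ^ e) := by
    intro p e hp h2 hsq
    exact hp.not_isUnit (hsq p (by rw [← pow_two]; exact pow_dvd_pow p h2))
  have hfac : ∀ p : ℕ, p.Prime → (∑' e : ℕ, g (p ^ e)) = 1 + g p := by
    intro p hp
    have h0 : ∀ e ∉ Finset.range 2, g (p ^ e) = 0 := by
      intro e he
      simp [hg, hnotsq p e hp (by simp at he; omega)]
    rw [tsum_eq_sum h0, show Finset.range 2 = {0, 1} by rfl,
      Finset.sum_insert (by simp), Finset.sum_singleton]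
    simp [hg1]
  have hEP := EulerProduct.eulerProduct_hasProd hg1 hgmul hsum hg0
  rw [funext fun p : Nat.Primes => hfac p p.2] at hEP
  set a : Nat.Primes → ℝ := fun p => 1 + g p with ha
  -- second multiplicative function
  set h : ℕ → ℝ := fun n => if Squarefree n ∧ n.Coprime k then 1 / (n : ℝ) ^ 2 else 0 with hh
  have hh1 : h 1 = 1 := by simp [hh, Nat.coprime_one_left]
  have hh0 : h 0 = 0 := by simp [hh, not_squarefree_zero]
  have hhmul : ∀ {m n : ℕ}, Nat.Coprime m n → h (m * n) = h m * h n := by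
    intro m n hmn
    simp only [hh, Nat.squarefree_mul hmn, Nat.coprime_mul_iff_left]
    split_ifs with h1 h2 h3 <;> push_cast <;> first | ring1 | tauto
  have hhsum : Summable (fun n => ‖h n‖) := by
    apply Summable.of_nonneg_of_le (fun n => norm_nonneg _) (fun n => ?_)
      ((Real.summable_one_div_nat_pow (p := 2)).mpr one_lt_two)
    simp only [hh, Real.norm_eq_abs]
    split_ifs with hc
    · rw [abs_of_nonneg (by positivity)]
    · simp only [abs_zero]; positivity
  have hhp : ∀ p : ℕ, p.Prime →
      h p = if p ∣ k then 0 else 1 / (p : ℝ) ^ 2 := by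
    intro p hp
    simp only [hh, hp.squarefree, true_and]
    rcases Decidable.em (p ∣ k) with hd | hd
    · rw [if_neg (fun hc => (hp.coprime_iff_not_dvd.mp hc) hd), if_pos hd]
    · rw [if_pos (hp.coprime_iff_not_dvd.mpr hd), if_neg hd]
  have hhfac : ∀ p : ℕ, p.Prime → (∑' e : ℕ, h (p ^ e)) = 1 + h p := by
    intro p hp
    have h0 : ∀ e ∉ Finset.range 2, h (p ^ e) = 0 := by
      intro e he
      simp [hh, hnotsq p e hp (by simp at he; omega)]
    rw [tsum_eq_sum h0, show Finset.range 2 = {0, 1} by rfl,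
      Finset.sum_insert (by simp), Finset.sum_singleton]
    simp [hh1]
  have hEP2 := EulerProduct.eulerProduct_hasProd hh1 hhmul hhsum hh0
  rw [funext fun p : Nat.Primes => hhfac p p.2] at hEP2
  set b : Nat.Primes → ℝ := fun p => 1 + h p with hb
  set s : Set Nat.Primes := {p | (p : ℕ) ∣ k} with hs
  have hsfin : s.Finite := by
    apply Set.Finite.ofFinset ((k.primeFactors).attach.image
      (fun q => (⟨q.1, Nat.prime_of_mem_primeFactors q.2⟩ : Nat.Primes)))
    intro p
    simp only [Finset.mem_image, Finset.mem_attach, true_and, Subtype.exists, hs,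
      Set.mem_setOf_eq]
    constructor
    · rintro ⟨q, hq, rfl⟩
      exact Nat.dvd_of_mem_primeFactors hq
    · intro hdvd
      exact ⟨p, Nat.mem_primeFactors.mpr ⟨p.2, hdvd, hk.ne'⟩, by simp⟩
  haveI : Fintype s := hsfin.fintype
  -- HasProd of b restricted to sᶜ
  have hbsupp : Function.mulSupport b ⊆ sᶜ := by
    intro p hp hps
    apply hp
    show 1 + h (p : ℕ) = 1
    have hd : (p : ℕ) ∣ k := hps
    rw [hhp _ p.2, if_pos hd]
    norm_num
  set T : ℝ := ∑' n : ℕ, h n with hT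
  have hbsc : HasProd (b ∘ (↑) : ↥sᶜ → ℝ) T :=
    (hasProd_subtype_iff_of_mulSupport_subset hbsupp).mpr hEP2
  have hab : (a ∘ (↑) : ↥sᶜ → ℝ) = (b ∘ (↑) : ↥sᶜ → ℝ) := by
    funext x
    show 1 + g ((x : Nat.Primes) : ℕ) = 1 + h ((x : Nat.Primes) : ℕ)
    have hx : ¬ ((x : Nat.Primes) : ℕ) ∣ k := x.2
    rw [hgp _ (x : Nat.Primes).2, hhp _ (x : Nat.Primes).2, if_neg hx, if_neg hx]
  have hasc : HasProd (a ∘ (↑) : ↥sᶜ → ℝ) T := by rw [hab]; exact hbsc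
  have has : HasProd (a ∘ (↑) : ↥s → ℝ) (∏ x : ↥s, a x) := hasProd_fintype _
  have hcomb := has.mul_compl hasc
  have hS : (∑' n : ℕ, g n) = (∏ x : ↥s, a x) * T := hEP.unique hcomb
  -- first factor equals finite product over primeFactors
  have hP1 : (∏ x : ↥s, a x) = ∏ p ∈ k.primeFactors, (1 + 1 / (p : ℝ)) := by
    apply Finset.prod_bij (fun (x : ↥s) _ => ((x : Nat.Primes) : ℕ))
    · intro x _
      exact Nat.mem_primeFactors.mpr ⟨(x : Nat.Primes).2, x.2, hk.ne'⟩
    · intro x _ y _ hxy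
      exact Subtype.ext (Subtype.ext hxy)
    · intro p hp
      exact ⟨⟨⟨p, Nat.prime_of_mem_primeFactors hp⟩, Nat.dvd_of_mem_primeFactors hp⟩,
        Finset.mem_univ _, rfl⟩
    · intro x _
      show 1 + g ((x : Nat.Primes) : ℕ) = 1 + 1 / (((x : Nat.Primes) : ℕ) : ℝ)
      have hx : ((x : Nat.Primes) : ℕ) ∣ k := x.2
      rw [hgp _ (x : Nat.Primes).2, if_pos hx]
  -- second factor equals the tprod over the subtype of ℕ
  let e : ↥sᶜ ≃ {p : ℕ // p.Prime ∧ ¬ p ∣ k} :=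
    { toFun := fun x => ⟨(x : Nat.Primes), (x : Nat.Primes).2, x.2⟩
      invFun := fun y => ⟨⟨y.1, y.2.1⟩, y.2.2⟩
      left_inv := fun x => rfl
      right_inv := fun y => rfl }
  have hfe : (fun p : {p : ℕ // p.Prime ∧ ¬ p ∣ k} => (1 + 1 / ((p : ℕ) : ℝ) ^ 2)) ∘ e
      = (a ∘ (↑) : ↥sᶜ → ℝ) := by
    funext x
    show 1 + 1 / (((e x : ℕ)) : ℝ) ^ 2 = 1 + g ((x : Nat.Primes) : ℕ)
    have hx : ¬ ((x : Nat.Primes) : ℕ) ∣ k := x.2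
    rw [hgp _ (x : Nat.Primes).2, if_neg hx]
    rfl
  have hP2 : (∏' p : {p : ℕ // p.Prime ∧ ¬ p ∣ k}, (1 + 1 / ((p : ℕ) : ℝ) ^ 2)) = T := by
    refine HasProd.tprod_eq ?_
    rw [← Equiv.hasProd_iff e, hfe]
    exact hasc
  -- left-hand side
  have hL : (∑' d' : {d : ℕ // Squarefree d}, (1 : ℝ) / ((d' : ℕ) * Nat.lcm k (d' : ℕ)))
      = (1 / (k : ℝ)) * ∑' n : ℕ, g n := by
    have step1 : ∀ d' : {d : ℕ // Squarefree d},
        (1 : ℝ) / ((d' : ℕ) * Nat.lcm k (d' : ℕ)) = (1 / (k : ℝ)) * g d' := by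
      intro ⟨d, hd⟩
      have hd0 : d ≠ 0 := hd.ne_zero
      have hgcd0 : Nat.gcd k d ≠ 0 := Nat.gcd_ne_zero_left hk.ne'
      have hlcm : (Nat.gcd k d : ℝ) * (Nat.lcm k d : ℝ) = k * d := by
        exact_mod_cast congrArg Nat.cast (Nat.gcd_mul_lcm k d)
      have hlcm0 : (Nat.lcm k d : ℝ) ≠ 0 := by
        have := Nat.pos_of_ne_zero (Nat.lcm_ne_zero hk.ne' hd0)
        positivity
      simp only [hg, hd, if_true]
      have hk0 : (k : ℝ) ≠ 0 := Nat.cast_ne_zero.mpr hk.ne'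
      have hd0' : (d : ℝ) ≠ 0 := Nat.cast_ne_zero.mpr hd0
      have hgcd0' : (Nat.gcd k d : ℝ) ≠ 0 := Nat.cast_ne_zero.mpr hgcd0
      field_simp
      nlinarith [hlcm]
    rw [tsum_congr step1, tsum_mul_left]
    congr 1
    rw [show (∑' (x : {d : ℕ // Squarefree d}), g ↑x)
        = ∑' (x : ↑{d : ℕ | Squarefree d}), g ↑x from rfl,
      tsum_subtype {d : ℕ | Squarefree d} g]
    apply tsum_congr
    intro n
    by_cases hsq : Squarefree n
    · exact Set.indicator_of_mem (show n ∈ {d : ℕ | Squarefree d} from hsq) g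
    · have h0 : g n = 0 := by simp [hg, hsq]
      exact (Set.indicator_of_notMem
        (show n ∉ {d : ℕ | Squarefree d} from hsq) g).trans h0.symm
  rw [hL, hS, hP1, hP2]
  ring
end

section
/- There exists an absolute constant C > 0 such that for every positive integer k, the sum over squarefree positive integers d' of 1/(d'·lcm(k, d')) is at most C · k^{-2/3}. In particular this sum is at most a constant times 1/φ(k), where φ is Euler's totient function. -/
open scoped Classical

open Finset in
private lemma squarefree_div_sum_le (k : ℕ) (hk : 0 < k) :
    (∑ q ∈ k.divisors.filter Squarefree, (1 : ℝ) / q) ≤ (k : ℝ) / (Nat.totient k) := by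
  have hP : ∀ p ∈ k.primeFactors, p.Prime := fun p hp => Nat.prime_of_mem_primeFactors hp
  -- step 1 : sum over squarefree divisors ≤ ∏ (1 + 1/p)
  have h1 : (∑ q ∈ k.divisors.filter Squarefree, (1 : ℝ) / q) ≤
      ∏ p ∈ k.primeFactors, (1 + 1 / (p : ℝ)) := by
    have hprod : ∏ p ∈ k.primeFactors, ((1 : ℝ) / p + 1) =
        ∑ t ∈ k.primeFactors.powerset, ∏ p ∈ t, (1 : ℝ) / p := by
      rw [Finset.prod_add]
      simp
    have hinj : ∀ x ∈ k.divisors.filter Squarefree, ∀ y ∈ k.divisors.filter Squarefree,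
        Nat.primeFactors x = Nat.primeFactors y → x = y := by
      intro x hx y hy hxy
      simp only [mem_filter] at hx hy
      rw [← Nat.prod_primeFactors_of_squarefree hx.2, ← Nat.prod_primeFactors_of_squarefree hy.2,
        hxy]
    have himg : (k.divisors.filter Squarefree).image Nat.primeFactors ⊆
        k.primeFactors.powerset := by
      intro t ht
      simp only [mem_image] at ht
      obtain ⟨q, hq, rfl⟩ := ht
      simp only [mem_filter, Nat.mem_divisors] at hq
      exact mem_powerset.2 (Nat.primeFactors_mono hq.1.1 hq.1.2)
    calc (∑ q ∈ k.divisors.filter Squarefree, (1 : ℝ) / q)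
        = ∑ q ∈ k.divisors.filter Squarefree, ∏ p ∈ q.primeFactors, (1 : ℝ) / p := by
          refine Finset.sum_congr rfl fun q hq => ?_
          simp only [mem_filter] at hq
          rw [Finset.prod_div_distrib, Finset.prod_const_one, ← Nat.cast_prod,
            Nat.prod_primeFactors_of_squarefree hq.2]
      _ = ∑ t ∈ (k.divisors.filter Squarefree).image Nat.primeFactors,
            ∏ p ∈ t, (1 : ℝ) / p := by rw [Finset.sum_image hinj]
      _ ≤ ∑ t ∈ k.primeFactors.powerset, ∏ p ∈ t, (1 : ℝ) / p := by
          refine Finset.sum_le_sum_of_subset_of_nonneg himg fun t _ _ => ?_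
          exact Finset.prod_nonneg fun p _ => by positivity
      _ = ∏ p ∈ k.primeFactors, ((1 : ℝ) / p + 1) := hprod.symm
      _ = ∏ p ∈ k.primeFactors, (1 + 1 / (p : ℝ)) := by
          refine Finset.prod_congr rfl fun p _ => by ring
  -- step 2 : ∏ (1 + 1/p) ≤ ∏ p/(p-1)
  have h2 : ∏ p ∈ k.primeFactors, (1 + 1 / (p : ℝ)) ≤
      ∏ p ∈ k.primeFactors, ((p : ℝ) / ((p : ℝ) - 1)) := by
    refine Finset.prod_le_prod (fun p hp => by positivity) (fun p hp => ?_)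
    have h2p : 2 ≤ p := (hP p hp).two_le
    have hp1 : (1 : ℝ) ≤ (p : ℝ) - 1 := by
      have : (2 : ℝ) ≤ (p : ℝ) := by exact_mod_cast h2p
      linarith
    have hppos : (0 : ℝ) < p := by
      have : (2 : ℝ) ≤ (p : ℝ) := by exact_mod_cast h2p
      linarith
    rw [le_div_iff₀ (by linarith : (0 : ℝ) < (p : ℝ) - 1)]
    have hinv : (1 / (p : ℝ)) * p = 1 := by field_simp
    have h1p : (0 : ℝ) < 1 / (p : ℝ) := by positivity
    nlinarith
  -- step 3 : ∏ p/(p-1) = k / φ(k)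
  have h3 : ∏ p ∈ k.primeFactors, ((p : ℝ) / ((p : ℝ) - 1)) = (k : ℝ) / (Nat.totient k) := by
    have key := Nat.totient_mul_prod_primeFactors k
    have hcast : ((Nat.totient k : ℝ)) * ∏ p ∈ k.primeFactors, (p : ℝ) =
        (k : ℝ) * ∏ p ∈ k.primeFactors, ((p : ℝ) - 1) := by
      have : ∀ p ∈ k.primeFactors, ((p - 1 : ℕ) : ℝ) = (p : ℝ) - 1 := fun p hp => by
        have := (hP p hp).two_le
        push_cast [Nat.cast_sub (le_trans one_le_two this)]
        ring
      calc ((Nat.totient k : ℝ)) * ∏ p ∈ k.primeFactors, (p : ℝ)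
          = ((Nat.totient k * ∏ p ∈ k.primeFactors, p : ℕ) : ℝ) := by push_cast; ring
        _ = ((k * ∏ p ∈ k.primeFactors, (p - 1) : ℕ) : ℝ) := by rw [key]
        _ = (k : ℝ) * ∏ p ∈ k.primeFactors, ((p : ℝ) - 1) := by
            push_cast
            rw [Finset.prod_congr rfl this]
    have hphi : (0 : ℝ) < Nat.totient k := by
      exact_mod_cast Nat.totient_pos.2 hk
    have hprodpos : (0 : ℝ) < ∏ p ∈ k.primeFactors, ((p : ℝ) - 1) := by
      refine Finset.prod_pos fun p hp => ?_
      have : (2 : ℝ) ≤ (p : ℝ) := by exact_mod_cast (hP p hp).two_le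
      linarith
    rw [Finset.prod_div_distrib, div_eq_div_iff (ne_of_gt hprodpos) (ne_of_gt hphi)]
    linear_combination hcast
  calc (∑ q ∈ k.divisors.filter Squarefree, (1 : ℝ) / q) ≤ _ := h1
    _ ≤ _ := h2
    _ = _ := h3

open Finset in
private lemma squarefree_div_sum_le' (k : ℕ) (hk : 0 < k) :
    (∑ q ∈ k.divisors.filter Squarefree, (1 : ℝ) / q) ≤ 4 * (k : ℝ) ^ ((1 : ℝ)/3) := by
  have hsub : k.divisors.filter Squarefree ⊆ Finset.Icc 1 k := by
    intro q hq
    simp only [mem_filter, Nat.mem_divisors] at hq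
    exact Finset.mem_Icc.2 ⟨Nat.one_le_iff_ne_zero.2 hq.2.ne_zero, Nat.le_of_dvd hk hq.1.1⟩
  have h1 : (∑ q ∈ k.divisors.filter Squarefree, (1 : ℝ) / q) ≤
      ∑ q ∈ Finset.Icc 1 k, (1 : ℝ) / q := by
    refine Finset.sum_le_sum_of_subset_of_nonneg hsub fun q _ _ => by positivity
  have h2 : (∑ q ∈ Finset.Icc 1 k, (1 : ℝ) / q) = (harmonic k : ℝ) := by
    rw [harmonic_eq_sum_Icc]
    push_cast
    simp [one_div]
  have h3 : (harmonic k : ℝ) ≤ 1 + Real.log k := harmonic_le_one_add_log k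
  have hk1 : (1 : ℝ) ≤ (k : ℝ) := by exact_mod_cast hk
  have hkpos : (0 : ℝ) < k := by positivity
  have h4 : Real.log k ≤ 3 * (k : ℝ) ^ ((1 : ℝ)/3) := by
    have := Real.log_rpow hkpos ((1:ℝ)/3)
    have hle : Real.log ((k : ℝ) ^ ((1:ℝ)/3)) ≤ (k : ℝ) ^ ((1:ℝ)/3) :=
      Real.log_le_self (by positivity)
    nlinarith [this, hle]
  have h5 : (1 : ℝ) ≤ (k : ℝ) ^ ((1 : ℝ)/3) :=
    Real.one_le_rpow hk1 (by norm_num)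
  calc (∑ q ∈ k.divisors.filter Squarefree, (1 : ℝ) / q)
      ≤ (harmonic k : ℝ) := h2 ▸ h1
    _ ≤ 1 + Real.log k := h3
    _ ≤ (k : ℝ) ^ ((1 : ℝ)/3) + 3 * (k : ℝ) ^ ((1 : ℝ)/3) := by linarith
    _ = 4 * (k : ℝ) ^ ((1 : ℝ)/3) := by ring

open Finset in
private lemma key_tsum_bound (k : ℕ) (hk : 0 < k) :
    (∑' d' : {d : ℕ // Squarefree d}, (1 : ℝ) / ((d' : ℕ) * Nat.lcm k (d' : ℕ))) ≤
      (∑' m : ℕ, 1 / ((m : ℝ) + 1) ^ 2) / k *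
        (∑ q ∈ k.divisors.filter Squarefree, (1 : ℝ) / q) := by
  set Z : ℝ := ∑' m : ℕ, 1 / ((m : ℝ) + 1) ^ 2 with hZ
  have hZsum : Summable (fun m : ℕ => 1 / ((m : ℝ) + 1) ^ 2) := by
    have : Summable (fun m : ℕ => 1 / ((m : ℝ)) ^ 2) := Real.summable_one_div_nat_pow.2 one_lt_two
    have := (summable_nat_add_iff 1).2 this
    refine this.congr fun m => by push_cast; ring_nf
  -- index type for the majorant
  set T := {q : ℕ // q ∈ k.divisors.filter Squarefree} × ℕ with hT
  set g : T → ℝ := fun p => 1 / ((k : ℝ) * (p.1 : ℕ) * ((p.2 : ℝ) + 1) ^ 2) with hg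
  have hgnn : ∀ p : T, 0 ≤ g p := fun p => by positivity
  -- the injection
  have hd_pos : ∀ d : {d : ℕ // Squarefree d}, 0 < (d : ℕ) :=
    fun d => Nat.pos_of_ne_zero d.2.ne_zero
  have hgcd_mem : ∀ d : {d : ℕ // Squarefree d},
      Nat.gcd k (d : ℕ) ∈ k.divisors.filter Squarefree := by
    intro d
    refine mem_filter.2 ⟨Nat.mem_divisors.2 ⟨Nat.gcd_dvd_left _ _, hk.ne'⟩, ?_⟩
    exact d.2.squarefree_of_dvd (Nat.gcd_dvd_right _ _)
  set i : {d : ℕ // Squarefree d} → T :=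
    fun d => (⟨Nat.gcd k (d : ℕ), hgcd_mem d⟩, (d : ℕ) / Nat.gcd k (d : ℕ) - 1) with hi
  have hgcd_pos : ∀ d : {d : ℕ // Squarefree d}, 0 < Nat.gcd k (d : ℕ) :=
    fun d => Nat.gcd_pos_of_pos_left _ hk
  have hquot_pos : ∀ d : {d : ℕ // Squarefree d}, 0 < (d : ℕ) / Nat.gcd k (d : ℕ) :=
    fun d => Nat.div_pos (Nat.le_of_dvd (hd_pos d) (Nat.gcd_dvd_right _ _)) (hgcd_pos d)
  have hinj : Function.Injective i := by
    intro d1 d2 h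
    have h1 : Nat.gcd k (d1 : ℕ) = Nat.gcd k (d2 : ℕ) := congrArg (fun p => (p.1 : ℕ)) h
    have h2 : (d1 : ℕ) / Nat.gcd k (d1 : ℕ) - 1 = (d2 : ℕ) / Nat.gcd k (d2 : ℕ) - 1 :=
      congrArg Prod.snd h
    have hp1 := hquot_pos d1
    have hp2 := hquot_pos d2
    have h2' : (d1 : ℕ) / Nat.gcd k (d1 : ℕ) = (d2 : ℕ) / Nat.gcd k (d2 : ℕ) := by omega
    have e1 : (d1 : ℕ) = Nat.gcd k (d1 : ℕ) * ((d1 : ℕ) / Nat.gcd k (d1 : ℕ)) :=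
      (Nat.mul_div_cancel' (Nat.gcd_dvd_right _ _)).symm
    refine Subtype.ext (e1.trans ?_)
    rw [h2', h1]
    exact Nat.mul_div_cancel' (Nat.gcd_dvd_right _ _)
  -- term identity
  have hterm : ∀ d : {d : ℕ // Squarefree d},
      (1 : ℝ) / ((d : ℕ) * Nat.lcm k (d : ℕ)) = g (i d) := by
    intro d
    obtain ⟨e, he⟩ := Nat.gcd_dvd_right k (d : ℕ)
    have hq : 0 < Nat.gcd k (d : ℕ) := hgcd_pos d
    have hdiv : (d : ℕ) / Nat.gcd k (d : ℕ) = e :=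
      Nat.div_eq_of_eq_mul_right hq he
    have he' : 0 < e := by rw [← hdiv]; exact hquot_pos d
    have hlcm : Nat.lcm k (d : ℕ) = k * e := by
      refine Nat.eq_of_mul_eq_mul_left hq ?_
      rw [Nat.gcd_mul_lcm]
      conv_lhs => rw [he]
      ring
    have hnat : (d : ℕ) * Nat.lcm k (d : ℕ) = k * Nat.gcd k (d : ℕ) * e ^ 2 := by
      rw [hlcm]
      conv_lhs => rw [he]
      ring
    have hsucc : ((e - 1 : ℕ) : ℝ) + 1 = (e : ℝ) := by
      have h := Nat.sub_add_cancel he'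
      exact_mod_cast congrArg (Nat.cast : ℕ → ℝ) h
    simp only [hg, hi, hdiv]
    rw [← Nat.cast_mul, hnat, hsucc]
    push_cast
    ring_nf
  -- summability of g
  have hfiber : ∀ q : {q : ℕ // q ∈ k.divisors.filter Squarefree},
      Summable (fun m : ℕ => g (q, m)) := by
    intro q
    have : (fun m : ℕ => g (q, m)) =
        fun m : ℕ => (1 / ((k : ℝ) * (q : ℕ))) * (1 / ((m : ℝ) + 1) ^ 2) := by
      funext m
      simp only [hg]
      rw [div_mul_div_comm, one_mul]
    rw [this]
    exact hZsum.mul_left _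
  have hgsum : Summable g := by
    refine (summable_prod_of_nonneg hgnn).2 ⟨hfiber, ?_⟩
    exact Summable.of_finite
  -- summability of f
  have hfsum : Summable (fun d : {d : ℕ // Squarefree d} =>
      (1 : ℝ) / ((d : ℕ) * Nat.lcm k (d : ℕ))) := by
    refine (Summable.comp_injective hgsum hinj).congr fun d => (hterm d).symm
  -- tsum comparison
  have hle : (∑' d' : {d : ℕ // Squarefree d}, (1 : ℝ) / ((d' : ℕ) * Nat.lcm k (d' : ℕ))) ≤
      ∑' p : T, g p := by
    refine Summable.tsum_le_tsum_of_inj i hinj (fun c _ => hgnn c) (fun d => le_of_eq (hterm d))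
      hfsum hgsum
  -- compute tsum g
  have hq_pos : ∀ q : {q : ℕ // q ∈ k.divisors.filter Squarefree}, 0 < ((q : ℕ) : ℝ) := by
    intro q
    have hq := q.2
    simp only [mem_filter, Nat.mem_divisors] at hq
    have : 0 < (q : ℕ) := Nat.pos_of_ne_zero hq.2.ne_zero
    exact_mod_cast this
  have htsumg : (∑' p : T, g p) = Z / k * (∑ q ∈ k.divisors.filter Squarefree, (1 : ℝ) / q) := by
    rw [Summable.tsum_prod' hgsum hfiber]
    have : ∀ q : {q : ℕ // q ∈ k.divisors.filter Squarefree},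
        (∑' m : ℕ, g (q, m)) = Z / k * (1 / ((q : ℕ) : ℝ)) := by
      intro q
      have heq : (fun m : ℕ => g (q, m)) =
          fun m : ℕ => (1 / ((k : ℝ) * (q : ℕ))) * (1 / ((m : ℝ) + 1) ^ 2) := by
        funext m
        simp only [hg]
        rw [div_mul_div_comm, one_mul]
      rw [heq, tsum_mul_left, ← hZ]
      have hkpos : (0 : ℝ) < k := by exact_mod_cast hk
      have hqpos := hq_pos q
      field_simp
      try ring
    calc (∑' q : {q : ℕ // q ∈ k.divisors.filter Squarefree}, ∑' m : ℕ, g (q, m))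
        = ∑' q : {q : ℕ // q ∈ k.divisors.filter Squarefree}, Z / k * (1 / ((q : ℕ) : ℝ)) := by
          exact tsum_congr this
      _ = ∑ q ∈ k.divisors.filter Squarefree, Z / k * (1 / (q : ℝ)) :=
          Finset.tsum_subtype (k.divisors.filter Squarefree) (fun q => Z / k * (1 / (q : ℝ)))
      _ = Z / k * (∑ q ∈ k.divisors.filter Squarefree, (1 : ℝ) / q) := by
          rw [Finset.mul_sum]
  exact hle.trans (le_of_eq htsumg)

/-- There is an absolute constant `C > 0` such that for every positive integer `k`,
`∑_{d' squarefree} 1/(d'·lcm(k, d')) ≤ C · k^{-2/3}`; in particular the sum is at most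
a constant times `1/φ(k)`. -/
theorem sum_over_squarefree_upper : ∃ C : ℝ, 0 < C ∧ ∀ k : ℕ, 0 < k →
    (∑' d' : {d : ℕ // Squarefree d}, (1 : ℝ) / ((d' : ℕ) * Nat.lcm k (d' : ℕ))) ≤
      C * (k : ℝ) ^ (-(2 : ℝ) / 3) ∧
    (∑' d' : {d : ℕ // Squarefree d}, (1 : ℝ) / ((d' : ℕ) * Nat.lcm k (d' : ℕ))) ≤
      C * (1 / (Nat.totient k : ℝ)) := by
  set Z : ℝ := ∑' m : ℕ, 1 / ((m : ℝ) + 1) ^ 2 with hZ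
  have hZnn : 0 ≤ Z := tsum_nonneg fun m => by positivity
  refine ⟨4 * Z + 4, by positivity, fun k hk => ?_⟩
  have hkpos : (0 : ℝ) < k := by exact_mod_cast hk
  have hkey := key_tsum_bound k hk
  have hZk : 0 ≤ Z / k := by positivity
  constructor
  · -- first bound
    have hD := squarefree_div_sum_le' k hk
    have hrpow : (k : ℝ) ^ ((1 : ℝ)/3) / k = (k : ℝ) ^ (-(2 : ℝ)/3) := by
      rw [show (-(2:ℝ)/3) = (1:ℝ)/3 - 1 by norm_num, Real.rpow_sub hkpos, Real.rpow_one]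
    have hrnn : (0 : ℝ) ≤ (k : ℝ) ^ (-(2 : ℝ)/3) := Real.rpow_nonneg hkpos.le _
    calc (∑' d' : {d : ℕ // Squarefree d}, (1 : ℝ) / ((d' : ℕ) * Nat.lcm k (d' : ℕ)))
        ≤ Z / k * (∑ q ∈ Finset.filter Squarefree k.divisors, (1 : ℝ) / q) := hkey
      _ ≤ Z / k * (4 * (k : ℝ) ^ ((1 : ℝ)/3)) := mul_le_mul_of_nonneg_left hD hZk
      _ = 4 * Z * ((k : ℝ) ^ ((1 : ℝ)/3) / k) := by ring
      _ = 4 * Z * ((k : ℝ) ^ (-(2 : ℝ)/3)) := by rw [hrpow]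
      _ ≤ (4 * Z + 4) * (k : ℝ) ^ (-(2 : ℝ)/3) := by nlinarith
  · -- second bound
    have hD := squarefree_div_sum_le k hk
    have hphi : (0 : ℝ) < (Nat.totient k : ℝ) := by exact_mod_cast Nat.totient_pos.2 hk
    have h1 : (0 : ℝ) ≤ 1 / (Nat.totient k : ℝ) := by positivity
    calc (∑' d' : {d : ℕ // Squarefree d}, (1 : ℝ) / ((d' : ℕ) * Nat.lcm k (d' : ℕ)))
        ≤ Z / k * (∑ q ∈ Finset.filter Squarefree k.divisors, (1 : ℝ) / q) := hkey
      _ ≤ Z / k * ((k : ℝ) / (Nat.totient k : ℝ)) := mul_le_mul_of_nonneg_left hD hZk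
      _ = Z * (1 / (Nat.totient k : ℝ)) := by field_simp
      _ ≤ (4 * Z + 4) * (1 / (Nat.totient k : ℝ)) := by nlinarith
end

section
/- The series ∑_{d odd, squarefree, d ≥ 1} 1/(d · e(d)^{2/3}) converges, where e(d) is the multiplicative order of 2 modulo d (with e(1) = 1). -/
open scoped Classical

open Finset

/-! ### Basic facts about the order of 2 mod d -/

private lemma ord_pos {d : ℕ} (hd : Odd d) : 0 < orderOf (2 : ZMod d) := by
  have hd0 : d ≠ 0 := by rintro rfl; simp [Nat.odd_iff] at hd
  haveI : NeZero d := ⟨hd0⟩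
  have hcop : Nat.Coprime 2 d := Nat.coprime_two_left.mpr hd
  have hu : IsUnit (2 : ZMod d) := by
    have := (ZMod.isUnit_iff_coprime 2 d).mpr hcop
    simpa using this
  obtain ⟨u, hu⟩ := hu
  rw [← hu, orderOf_units]
  exact orderOf_pos u

private lemma ord_le {d : ℕ} (hd : Odd d) : orderOf (2 : ZMod d) ≤ d := by
  have hd0 : d ≠ 0 := by rintro rfl; simp [Nat.odd_iff] at hd
  haveI : NeZero d := ⟨hd0⟩
  have hcop : Nat.Coprime 2 d := Nat.coprime_two_left.mpr hd
  have hu : IsUnit (2 : ZMod d) := by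
    have := (ZMod.isUnit_iff_coprime 2 d).mpr hcop
    simpa using this
  obtain ⟨u, hu⟩ := hu
  rw [← hu, orderOf_units]
  calc orderOf u ≤ Fintype.card (ZMod d)ˣ := orderOf_le_card_univ
    _ = Nat.totient d := ZMod.card_units_eq_totient d
    _ ≤ d := Nat.totient_le d

private lemma dvd_ord {d : ℕ} (hd : Odd d) : d ∣ 2 ^ orderOf (2 : ZMod d) - 1 := by
  have hd0 : d ≠ 0 := by rintro rfl; simp [Nat.odd_iff] at hd
  haveI : NeZero d := ⟨hd0⟩
  rw [← ZMod.natCast_eq_zero_iff]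
  have h1 : (1 : ℕ) ≤ 2 ^ orderOf (2 : ZMod d) := Nat.one_le_two_pow
  push_cast [h1]
  rw [sub_eq_zero]
  exact_mod_cast (pow_orderOf_eq_one (2 : ZMod d))

/-! ### Reciprocal sums over primes -/

/-! ### Reciprocal sums over primes -/

private lemma card_res_fiber (t : ℕ) (T : Finset ℕ) (hT : ∀ p ∈ T, Nat.Coprime p 30) :
    (T.filter (fun p => p / 30 = t)).card ≤ 8 := by
  have h8 : ((Finset.range 30).filter (fun r => Nat.Coprime r 30)).card = 8 := by decide
  rw [← h8]
  apply Finset.card_le_card_of_injOn (fun p => p % 30)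
  · intro p hp
    rw [Finset.mem_coe, Finset.mem_filter] at hp ⊢
    refine ⟨Finset.mem_range.mpr (Nat.mod_lt _ (by norm_num)), ?_⟩
    have hc : Nat.Coprime p 30 := hT p hp.1
    rw [Nat.Coprime, ← Nat.gcd_rec]
    exact (Nat.coprime_comm.mp hc)
  · intro p hp q hq h
    simp only [Finset.mem_coe, Finset.mem_filter] at hp hq
    have h' : p % 30 = q % 30 := h
    obtain ⟨-, hp2⟩ := hp
    obtain ⟨-, hq2⟩ := hq
    omega

private lemma prime_recip_bound (M : ℕ) (hM : 1 ≤ M) (S : Finset ℕ)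
    (hS : ∀ p ∈ S, Nat.Prime p) (hcard : S.card ≤ M) :
    ∑ p ∈ S, (1 : ℝ) / p ≤ 4 / 15 * Real.log M + 10 := by
  classical
  have hM0 : (0 : ℝ) < M := by exact_mod_cast hM
  rw [← Finset.sum_filter_add_sum_filter_not S (fun p => 30 * M < p)]
  have hbig : ∑ p ∈ S.filter (fun p => 30 * M < p), (1 : ℝ) / p ≤ 1 / 30 := by
    have h1 : ∀ p ∈ S.filter (fun p => 30 * M < p), (1 : ℝ) / p ≤ 1 / (30 * M) := by
      intro p hp
      rw [Finset.mem_filter] at hp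
      apply one_div_le_one_div_of_le (by positivity)
      exact_mod_cast hp.2.le
    calc ∑ p ∈ S.filter (fun p => 30 * M < p), (1 : ℝ) / p
        ≤ (S.filter (fun p => 30 * M < p)).card • ((1 : ℝ) / (30 * M)) :=
          Finset.sum_le_card_nsmul _ _ _ h1
      _ ≤ (M : ℝ) * (1 / (30 * M)) := by
          rw [nsmul_eq_mul]
          apply mul_le_mul_of_nonneg_right _ (by positivity)
          exact_mod_cast le_trans (Finset.card_le_card (Finset.filter_subset _ _)) hcard
      _ = 1 / 30 := by field_simp <;> ring
  set S' := S.filter (fun p => ¬ 30 * M < p) with hS'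
  rw [← Finset.sum_filter_add_sum_filter_not S' (fun p => p ≤ 5)]
  have htiny : ∑ p ∈ S'.filter (fun p => p ≤ 5), (1 : ℝ) / p ≤ 3 / 2 := by
    have hsub : S'.filter (fun p => p ≤ 5) ⊆ ({2, 3, 5} : Finset ℕ) := by
      intro p hp
      simp only [hS', Finset.mem_filter] at hp
      obtain ⟨⟨hpS, -⟩, hp5⟩ := hp
      have hpp : Nat.Prime p := hS p hpS
      have : p = 2 ∨ p = 3 ∨ p = 5 := by
        interval_cases p <;> revert hpp <;> decide
      simp [this]
    have h1 : ∀ p ∈ S'.filter (fun p => p ≤ 5), (1 : ℝ) / p ≤ 1 / 2 := by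
      intro p hp
      have hpS : p ∈ S := by
        have := (Finset.mem_filter.mp hp).1
        exact (Finset.mem_filter.mp this).1
      apply one_div_le_one_div_of_le (by norm_num)
      exact_mod_cast (hS p hpS).two_le
    calc ∑ p ∈ S'.filter (fun p => p ≤ 5), (1 : ℝ) / p
        ≤ (S'.filter (fun p => p ≤ 5)).card • ((1 : ℝ) / 2) :=
          Finset.sum_le_card_nsmul _ _ _ h1
      _ ≤ 3 * (1 / 2) := by
          rw [nsmul_eq_mul]
          apply mul_le_mul_of_nonneg_right _ (by norm_num)
          have h3 := Finset.card_le_card hsub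
          have : ({2, 3, 5} : Finset ℕ).card = 3 := by decide
          rw [this] at h3
          exact_mod_cast h3
      _ = 3 / 2 := by norm_num
  have hmed : ∑ p ∈ (S'.filter (fun p => ¬ p ≤ 5)), (1 : ℝ) / p
      ≤ 4 / 15 * Real.log M + 8 + 4 / 15 := by
    set T := S'.filter (fun p => ¬ p ≤ 5) with hT
    have hTfacts : ∀ p ∈ T, Nat.Prime p ∧ 5 < p ∧ p ≤ 30 * M := by
      intro p hp
      simp only [hT, hS', Finset.mem_filter] at hp
      exact ⟨hS p hp.1.1, by omega, by omega⟩
    have hTcop : ∀ p ∈ T, Nat.Coprime p 30 := by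
      intro p hp
      obtain ⟨hpp, hp5, -⟩ := hTfacts p hp
      rw [Nat.Prime.coprime_iff_not_dvd hpp]
      intro hdvd
      have hle : p ≤ 30 := Nat.le_of_dvd (by norm_num) hdvd
      interval_cases p <;> revert hdvd <;> revert hpp <;> decide
    have hmaps : ∀ p ∈ T, p / 30 ∈ Finset.range M := by
      intro p hp
      obtain ⟨hpp, hp5, hple⟩ := hTfacts p hp
      rw [Finset.mem_range]
      have hne : p ≠ 30 * M := by
        intro h
        have h30 : (30 : ℕ) ∣ p := h ▸ ⟨M, rfl⟩
        have hg : Nat.gcd p 30 = 1 := hTcop p hp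
        have h31 : (30 : ℕ) ∣ Nat.gcd p 30 := Nat.dvd_gcd h30 dvd_rfl
        rw [hg] at h31
        exact absurd (Nat.le_of_dvd one_pos h31) (by norm_num)
      omega
    rw [← Finset.sum_fiberwise_of_maps_to hmaps (fun p => (1 : ℝ) / p)]
    have hfiber : ∀ t ∈ Finset.range M,
        ∑ p ∈ T.filter (fun p => p / 30 = t), (1 : ℝ) / p ≤ 8 / (30 * t + 1) := by
      intro t _
      have h1 : ∀ p ∈ T.filter (fun p => p / 30 = t), (1 : ℝ) / p ≤ 1 / (30 * t + 1) := by
        intro p hp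
        rw [Finset.mem_filter] at hp
        obtain ⟨hpp, hp5, hple⟩ := hTfacts p hp.1
        have hge : 30 * t ≤ p := by
          have h2 := Nat.div_mul_le_self p 30
          have h3 := hp.2
          omega
        have hne : p ≠ 30 * t := by
          intro h
          have h30 : (30 : ℕ) ∣ p := h ▸ ⟨t, rfl⟩
          have hg : Nat.gcd p 30 = 1 := hTcop p hp.1
          have h31 : (30 : ℕ) ∣ Nat.gcd p 30 := Nat.dvd_gcd h30 dvd_rfl
          rw [hg] at h31
          exact absurd (Nat.le_of_dvd one_pos h31) (by norm_num)
        apply one_div_le_one_div_of_le (by positivity)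
        have : 30 * t + 1 ≤ p := by omega
        exact_mod_cast this
      calc ∑ p ∈ T.filter (fun p => p / 30 = t), (1 : ℝ) / p
          ≤ (T.filter (fun p => p / 30 = t)).card • ((1 : ℝ) / (30 * t + 1)) :=
            Finset.sum_le_card_nsmul _ _ _ h1
        _ ≤ 8 * ((1 : ℝ) / (30 * t + 1)) := by
            rw [nsmul_eq_mul]
            apply mul_le_mul_of_nonneg_right _ (by positivity)
            exact_mod_cast card_res_fiber t T hTcop
        _ = 8 / (30 * t + 1) := by ring
    refine le_trans (Finset.sum_le_sum hfiber) ?_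
    obtain ⟨m, rfl⟩ : ∃ m, M = m + 1 := ⟨M - 1, by omega⟩
    rw [Finset.sum_range_succ']
    push_cast
    have hstep : ∑ i ∈ Finset.range m, (8 : ℝ) / (30 * ((i : ℝ) + 1) + 1)
        ≤ 4 / 15 * ((harmonic m : ℝ)) := by
      have hh : (harmonic m : ℝ) = ∑ i ∈ Finset.range m, (1 : ℝ) / ((i : ℝ) + 1) := by
        rw [harmonic]
        push_cast
        simp [one_div]
      rw [hh, Finset.mul_sum]
      apply Finset.sum_le_sum
      intro i _
      have heq : (4 : ℝ) / 15 * (1 / ((i : ℝ) + 1)) = 4 / (15 * ((i : ℝ) + 1)) := by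
        field_simp
      rw [heq, div_le_div_iff₀ (by positivity) (by positivity)]
      nlinarith [Nat.cast_nonneg (α := ℝ) i]
    have hharm : (harmonic m : ℝ) ≤ 1 + Real.log ((m : ℝ) + 1) := by
      refine le_trans (harmonic_le_one_add_log m) ?_
      have : Real.log m ≤ Real.log ((m : ℝ) + 1) := by
        rcases Nat.eq_zero_or_pos m with rfl | hm
        · simp
        · apply Real.log_le_log (by exact_mod_cast hm)
          linarith
      linarith
    have hlog : (0 : ℝ) ≤ Real.log ((m : ℝ) + 1) := Real.log_nonneg (by
      have : (0:ℝ) ≤ (m:ℝ) := Nat.cast_nonneg m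
      linarith)
    norm_num
    linarith
  linarith

private lemma prime_prod_bound (M : ℕ) (hM : 1 ≤ M) (S : Finset ℕ)
    (hS : ∀ p ∈ S, Nat.Prime p) (hcard : S.card ≤ M) :
    ∏ p ∈ S, (1 + (1 : ℝ) / p) ≤ Real.exp 10 * (M : ℝ) ^ ((4 : ℝ) / 15) := by
  have hM0 : (0 : ℝ) < M := by exact_mod_cast hM
  have h1 : ∏ p ∈ S, (1 + (1 : ℝ) / p) ≤ ∏ p ∈ S, Real.exp (1 / p) := by
    apply Finset.prod_le_prod
    · intro p hp; positivity
    · intro p hp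
      rw [add_comm]
      exact Real.add_one_le_exp _
  rw [← Real.exp_sum] at h1
  refine le_trans h1 ?_
  have h2 := prime_recip_bound M hM S hS hcard
  calc Real.exp (∑ p ∈ S, (1 : ℝ) / p) ≤ Real.exp (4 / 15 * Real.log M + 10) :=
        Real.exp_le_exp.mpr h2
    _ = Real.exp 10 * (M : ℝ) ^ ((4 : ℝ) / 15) := by
        rw [Real.exp_add, Real.rpow_def_of_pos hM0, mul_comm (Real.log M), mul_comm]

private lemma recip_sum_bound (x : ℕ) (hx : 1 ≤ x) (s : Finset ℕ)
    (hs : ∀ d ∈ s, Odd d ∧ Squarefree d ∧ orderOf (2 : ZMod d) ≤ x) :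
    ∑ d ∈ s, (1 : ℝ) / d ≤ Real.exp 10 * (x : ℝ) ^ ((8 : ℝ) / 15) := by
  classical
  set N := ∏ k ∈ Finset.Icc 1 x, (2 ^ k - 1) with hN
  have hN0 : N ≠ 0 := by
    rw [hN]
    apply Finset.prod_ne_zero_iff.mpr
    intro k hk
    rw [Finset.mem_Icc] at hk
    have : 2 ≤ 2 ^ k := by
      calc 2 = 2 ^ 1 := rfl
        _ ≤ 2 ^ k := Nat.pow_le_pow_right (by norm_num) hk.1
    omega
  have hdvd : ∀ d ∈ s, d ∣ N := by
    intro d hd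
    obtain ⟨hodd, hsf, hord⟩ := hs d hd
    refine dvd_trans (dvd_ord hodd) ?_
    apply Finset.dvd_prod_of_mem
    rw [Finset.mem_Icc]
    exact ⟨ord_pos hodd, hord⟩
  set P := N.primeFactors with hP
  -- step 1 : bound the sum by the product over P
  have h2 : ∑ d ∈ s, (1 : ℝ) / d ≤ ∏ p ∈ P, (1 + (1 : ℝ) / p) := by
    have hre : ∀ d ∈ s, (1 : ℝ) / d = ∏ p ∈ d.primeFactors, (1 : ℝ) / p := by
      intro d hd
      obtain ⟨hodd, hsf, -⟩ := hs d hd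
      rw [Finset.prod_div_distrib, Finset.prod_const_one]
      congr 1
      rw [← Nat.cast_prod, Nat.prod_primeFactors_of_squarefree hsf]
    rw [Finset.sum_congr rfl hre]
    have himg : ∀ d ∈ s, d.primeFactors ∈ P.powerset := by
      intro d hd
      rw [Finset.mem_powerset, hP]
      exact Nat.primeFactors_mono (hdvd d hd) hN0
    have hinj : Set.InjOn Nat.primeFactors s := by
      intro a ha b hb hab
      have hA := (hs a ha).2.1
      have hB := (hs b hb).2.1
      rw [← Nat.prod_primeFactors_of_squarefree hA, ← Nat.prod_primeFactors_of_squarefree hB,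
        hab]
    calc ∑ d ∈ s, ∏ p ∈ d.primeFactors, (1 : ℝ) / p
        = ∑ Q ∈ s.image Nat.primeFactors, ∏ p ∈ Q, (1 : ℝ) / p := by
          rw [Finset.sum_image]
          intro a ha b hb hab
          exact hinj ha hb hab
      _ ≤ ∑ Q ∈ P.powerset, ∏ p ∈ Q, (1 : ℝ) / p := by
          apply Finset.sum_le_sum_of_subset_of_nonneg
          · intro Q hQ
            rw [Finset.mem_image] at hQ
            obtain ⟨d, hd, rfl⟩ := hQ
            exact himg d hd
          · intro Q _ _
            positivity
      _ = ∏ p ∈ P, ((1 : ℝ) / p + 1) := by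
          rw [Finset.prod_add]
          apply Finset.sum_congr rfl
          intro Q _
          rw [Finset.prod_const_one, mul_one]
      _ = ∏ p ∈ P, (1 + (1 : ℝ) / p) := by
          apply Finset.prod_congr rfl
          intro p _
          ring
  -- step 2 : card P ≤ x ^ 2
  have hcard : P.card ≤ x ^ 2 := by
    have hle1 : 2 ^ P.card ≤ N := by
      calc 2 ^ P.card ≤ ∏ p ∈ P, p :=
            Finset.pow_card_le_prod P id 2 (fun p hp => (Nat.prime_of_mem_primeFactors hp).two_le)
        _ ≤ N := Nat.le_of_dvd (Nat.pos_of_ne_zero hN0) (Nat.prod_primeFactors_dvd N)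
    have hle2 : N ≤ 2 ^ (x ^ 2) := by
      calc N ≤ ∏ k ∈ Finset.Icc 1 x, 2 ^ k := Finset.prod_le_prod' (fun k _ => Nat.sub_le _ _)
        _ = 2 ^ (∑ k ∈ Finset.Icc 1 x, k) := Finset.prod_pow_eq_pow_sum _ _ _
        _ ≤ 2 ^ (x ^ 2) := by
            apply Nat.pow_le_pow_right (by norm_num)
            calc ∑ k ∈ Finset.Icc 1 x, k ≤ ∑ k ∈ Finset.Icc 1 x, x :=
                  Finset.sum_le_sum (fun k hk => (Finset.mem_Icc.mp hk).2)
              _ = x * x := by rw [Finset.sum_const, Nat.card_Icc]; simp [mul_comm]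
              _ = x ^ 2 := (sq x).symm
    have := le_trans hle1 hle2
    exact Nat.pow_le_pow_iff_right (by norm_num) |>.mp this
  -- combine
  have hx2 : 1 ≤ x ^ 2 := Nat.one_le_pow _ _ hx
  have h3 := prime_prod_bound (x ^ 2) hx2 P (fun p hp => Nat.prime_of_mem_primeFactors hp) hcard
  refine le_trans h2 (le_trans h3 ?_)
  apply le_of_eq
  congr 1
  push_cast
  rw [← Real.rpow_natCast ((x : ℝ)) 2, ← Real.rpow_mul (Nat.cast_nonneg x)]
  norm_num

private noncomputable def gfun : ℕ → ℝ :=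
  fun d => (1 : ℝ) / ((d : ℝ) * ((orderOf (2 : ZMod d) : ℝ)) ^ ((2 : ℝ) / 3))

private lemma gfun_nonneg (d : ℕ) : 0 ≤ gfun d := by
  unfold gfun
  have h1 : (0 : ℝ) ≤ ((orderOf (2 : ZMod d) : ℝ)) ^ ((2 : ℝ) / 3) :=
    Real.rpow_nonneg (Nat.cast_nonneg _) _
  positivity

/-- The series `∑_{d odd squarefree} 1/(d · e(d)^{2/3})` converges, where `e(d)` is the
multiplicative order of `2` modulo `d` (with `e(1) = 1`). -/
theorem series_order_summable :
    Summable (fun d : {d : ℕ // Odd d ∧ Squarefree d} =>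
      (1 : ℝ) / (((d : ℕ) : ℝ) * ((orderOf (2 : ZMod (d : ℕ)) : ℝ)) ^ ((2 : ℝ) / 3))) := by
  have key : Summable (Set.indicator {d : ℕ | Odd d ∧ Squarefree d} gfun) := by
    set r : ℝ := (2 : ℝ) ^ (-(2 : ℝ) / 15) with hr
    have h2pos : (0 : ℝ) < 2 := by norm_num
    have hr0 : 0 ≤ r := Real.rpow_nonneg (by norm_num) _
    have hr1 : r < 1 := Real.rpow_lt_one_of_one_lt_of_neg (by norm_num) (by norm_num)
    set K : ℝ := Real.exp 10 * (2 : ℝ) ^ ((8 : ℝ) / 15) with hK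
    have hK0 : 0 ≤ K := by
      rw [hK]
      have : (0:ℝ) ≤ (2 : ℝ) ^ ((8 : ℝ) / 15) := Real.rpow_nonneg (by norm_num) _
      positivity
    apply summable_of_sum_range_le (c := K * (1 - r)⁻¹)
      (fun n => Set.indicator_nonneg (fun d _ => gfun_nonneg d) n)
    intro n
    have hind : ∑ i ∈ Finset.range n, Set.indicator {d : ℕ | Odd d ∧ Squarefree d} gfun i
        = ∑ d ∈ (Finset.range n).filter (fun d => Odd d ∧ Squarefree d), gfun d := by
      rw [Finset.sum_filter]
      apply Finset.sum_congr rfl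
      intro d _
      simp [Set.indicator_apply, Set.mem_setOf_eq]
    rw [hind]
    set s := (Finset.range n).filter (fun d => Odd d ∧ Squarefree d) with hs
    have hmaps : ∀ d ∈ s, Nat.log 2 (orderOf (2 : ZMod d)) ∈ Finset.range n := by
      intro d hd
      rw [hs, Finset.mem_filter, Finset.mem_range] at hd
      rw [Finset.mem_range]
      calc Nat.log 2 (orderOf (2 : ZMod d)) ≤ orderOf (2 : ZMod d) := Nat.log_le_self _ _
        _ ≤ d := ord_le hd.2.1
        _ < n := hd.1
    rw [← Finset.sum_fiberwise_of_maps_to hmaps gfun]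
    have hfiber : ∀ t ∈ Finset.range n,
        ∑ d ∈ s.filter (fun d => Nat.log 2 (orderOf (2 : ZMod d)) = t), gfun d ≤ K * r ^ t := by
      intro t _
      set F := s.filter (fun d => Nat.log 2 (orderOf (2 : ZMod d)) = t) with hF
      have hmem : ∀ d ∈ F, Odd d ∧ Squarefree d ∧ orderOf (2 : ZMod d) ≤ 2 ^ (t + 1) := by
        intro d hd
        rw [hF, Finset.mem_filter, hs, Finset.mem_filter] at hd
        obtain ⟨⟨-, hodd, hsf⟩, hlog⟩ := hd
        refine ⟨hodd, hsf, ?_⟩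
        have := Nat.lt_pow_succ_log_self (b := 2) (by norm_num) (orderOf (2 : ZMod d))
        rw [hlog] at this
        omega
      have hsum := recip_sum_bound (2 ^ (t + 1)) Nat.one_le_two_pow F hmem
      have hpt : ∀ d ∈ F, gfun d ≤ ((2 : ℝ) ^ (t : ℝ)) ^ (-(2 : ℝ) / 3) * ((1 : ℝ) / d) := by
        intro d hd
        obtain ⟨hodd, hsf, -⟩ := hmem d hd
        have hd1 : (1 : ℝ) ≤ (d : ℝ) := by
          have : d ≠ 0 := by rintro rfl; simp [Nat.odd_iff] at hodd
          exact_mod_cast Nat.one_le_iff_ne_zero.mpr this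
        have hept : (2 : ℕ) ^ t ≤ orderOf (2 : ZMod d) := by
          have hlog := (Finset.mem_filter.mp hd).2
          rw [← hlog]
          exact Nat.pow_log_le_self 2 (ne_of_gt (ord_pos hodd))
        have he : ((2 : ℝ) ^ (t : ℝ)) ^ ((2 : ℝ) / 3)
            ≤ ((orderOf (2 : ZMod d) : ℝ)) ^ ((2 : ℝ) / 3) := by
          apply Real.rpow_le_rpow (by positivity) ?_ (by norm_num)
          rw [Real.rpow_natCast]
          exact_mod_cast hept
        have hA : (0 : ℝ) < ((2 : ℝ) ^ (t : ℝ)) ^ ((2 : ℝ) / 3) := by positivity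
        have h1 : gfun d ≤ 1 / ((d : ℝ) * ((2 : ℝ) ^ (t : ℝ)) ^ ((2 : ℝ) / 3)) := by
          unfold gfun
          apply one_div_le_one_div_of_le (by nlinarith)
          exact mul_le_mul_of_nonneg_left he (by linarith)
        refine le_trans h1 (le_of_eq ?_)
        rw [neg_div, Real.rpow_neg (by positivity)]
        field_simp
      have hrqs : (0:ℝ) ≤ ((2 : ℝ) ^ (t : ℝ)) ^ (-(2 : ℝ) / 3) :=
        Real.rpow_nonneg (by positivity) _
      have hcast : ((2 ^ (t + 1) : ℕ) : ℝ) = (2 : ℝ) ^ ((t : ℝ) + 1) := by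
        push_cast
        rw [← Real.rpow_natCast (2 : ℝ) (t + 1)]
        push_cast
        ring_nf
      calc ∑ d ∈ F, gfun d
          ≤ ∑ d ∈ F, ((2 : ℝ) ^ (t : ℝ)) ^ (-(2 : ℝ) / 3) * ((1 : ℝ) / d) :=
            Finset.sum_le_sum hpt
        _ = ((2 : ℝ) ^ (t : ℝ)) ^ (-(2 : ℝ) / 3) * ∑ d ∈ F, (1 : ℝ) / d := by
            rw [Finset.mul_sum]
        _ ≤ ((2 : ℝ) ^ (t : ℝ)) ^ (-(2 : ℝ) / 3)
              * (Real.exp 10 * ((2 ^ (t + 1) : ℕ) : ℝ) ^ ((8 : ℝ) / 15)) :=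
            mul_le_mul_of_nonneg_left hsum hrqs
        _ = K * r ^ t := by
            rw [hcast]
            have e1 : ((2 : ℝ) ^ (t : ℝ)) ^ (-(2 : ℝ) / 3)
                = (2 : ℝ) ^ ((t : ℝ) * (-(2 : ℝ) / 3)) := (Real.rpow_mul h2pos.le _ _).symm
            have e2 : ((2 : ℝ) ^ ((t : ℝ) + 1)) ^ ((8 : ℝ) / 15)
                = (2 : ℝ) ^ (((t : ℝ) + 1) * ((8 : ℝ) / 15)) := (Real.rpow_mul h2pos.le _ _).symm
            have e3 : r ^ t = (2 : ℝ) ^ ((-(2 : ℝ) / 15) * (t : ℝ)) := by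
              rw [hr, ← Real.rpow_natCast ((2 : ℝ) ^ (-(2 : ℝ) / 15)) t,
                ← Real.rpow_mul h2pos.le]
            rw [e1, e2, e3, hK]
            rw [show ((t : ℝ) * (-(2 : ℝ) / 3)) = (-(2:ℝ)/3) * (t:ℝ) by ring]
            rw [show (((t : ℝ) + 1) * ((8 : ℝ) / 15)) = (8:ℝ)/15 + (8:ℝ)/15 * (t:ℝ) by ring]
            rw [Real.rpow_add h2pos]
            have hcomb : (2 : ℝ) ^ (-(2 : ℝ) / 3 * (t : ℝ)) * (2 : ℝ) ^ ((8 : ℝ) / 15 * (t : ℝ))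
                = (2 : ℝ) ^ (-(2 : ℝ) / 15 * (t : ℝ)) := by
              rw [← Real.rpow_add h2pos]
              congr 1
              ring
            rw [← hcomb]
            ring
    refine le_trans (Finset.sum_le_sum hfiber) ?_
    rw [← Finset.mul_sum]
    apply mul_le_mul_of_nonneg_left _ hK0
    exact sum_le_hasSum (Finset.range n) (fun i _ => pow_nonneg hr0 i)
      (hasSum_geometric_of_lt_one hr0 hr1)
  exact summable_subtype_iff_indicator.mpr key
end
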